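/- arXiv:1504.05009 — 2 statements merged into one kernel-verified Lean document; each statement's English description precedes it below -/
import Mathlib

section
/- (Integrality gap of the restricted dominating set problem in circle graphs.) Let m be a positive integer and represent chords of a circle with m marked points 0,1,…,m−1 as pairs (l,r) of indices with l < r. Say that a chord β = (l',r') dominates a chord α = (l,r) if l' ≤ l ≤ r' ≤ r or l ≤ l' ≤ r ≤ r'. Let D be a finite set of demand chords, C a finite set of covering chords, g : C → ℝ≥0 a cost function, and z : C → ℝ≥0 a fractional assignment satisfying, for every α ∈ D, the covering constraint ∑_{β ∈ C, β dominates α} z(β) ≥ 1. Then there exists a subset S ⊆ C such that every demand chord α ∈ D is dominated by some chord β ∈ S, and ∑_{β ∈ S} g(β) ≤ 8 · ∑_{β ∈ C} g(β)·z(β). -/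
/-!
Every chord dominating `α = (l, r)` crosses either its left end `l` or its right end `r`, so each
demand puts fractional mass at least `1/2` on one of these two one-sided families, and it suffices
to cover each side at cost `4 ∑ g z`.

For left crossings this is a primal-dual argument. Take the demand `α` with the smallest right
end, raise its dual variable to the cost `y` of its cheapest left-crossing chord, subtract `y`
from the costs of all chords crossing the left end of `α`, and recurse on the remaining demands.
This lowers the fractional cost by at least `y/2`. The recursive cover is kept irredundant (each
chord has a private demand); the private demands all have right end `≥ r`, and then the chords
crossing the left end of `α` reduce to two extreme ones (furthest left, furthest right), so `y`
is paid at most twice. Right crossings are symmetric, with demands taken by decreasing left end.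
-/

/-- Chord `β = (l', r')` dominates chord `α = (l, r)` iff
`l' ≤ l ≤ r' ≤ r` or `l ≤ l' ≤ r ≤ r'` (the two chords interleave). -/
def Dominates (β α : ℕ × ℕ) : Prop :=
  (β.1 ≤ α.1 ∧ α.1 ≤ β.2 ∧ β.2 ≤ α.2) ∨ (α.1 ≤ β.1 ∧ β.1 ≤ α.2 ∧ α.2 ≤ β.2)

instance (β α : ℕ × ℕ) : Decidable (Dominates β α) := by
  unfold Dominates; infer_instance

open Finset

theorem Finset.sum_union_le_add {ι M : Type*} [DecidableEq ι] [AddCommMonoid M]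
    [PartialOrder M] [IsOrderedAddMonoid M] {s t : Finset ι} {f : ι → M}
    (hf : ∀ i ∈ s ∩ t, 0 ≤ f i) : ∑ i ∈ s ∪ t, f i ≤ ∑ i ∈ s, f i + ∑ i ∈ t, f i := by
  rw [← sum_union_inter]
  exact le_add_of_nonneg_right (sum_nonneg hf)

theorem Finset.sum_sub_ite_mul {ι R : Type*} [CommRing R] (s : Finset ι) (P : ι → Prop)
    [DecidablePred P] (g z : ι → R) (y : R) :
    ∑ i ∈ s, (g i - if P i then y else 0) * z i =
      ∑ i ∈ s, g i * z i - y * ∑ i ∈ s with P i, z i := by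
  simp [sub_mul, sum_sub_distrib, ite_mul, sum_ite, mul_sum]

theorem Finset.sum_eq_sum_sub_ite_add {ι R : Type*} [CommRing R] (s : Finset ι) (P : ι → Prop)
    [DecidablePred P] (g : ι → R) (y : R) :
    ∑ i ∈ s, g i = ∑ i ∈ s, (g i - if P i then y else 0) + y * #{i ∈ s | P i} := by
  simp [sum_sub_distrib, sum_ite, mul_comm]

section Cover

variable {ι κ : Type*} (cov : ι → κ → Prop)

def IsCover (S : Finset ι) (A : Finset κ) : Prop := ∀ a ∈ A, ∃ p ∈ S, cov p a

def HasPrivateDemands (S : Finset ι) (A : Finset κ) : Prop :=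
  ∀ q ∈ S, ∃ b ∈ A, cov q b ∧ ∀ q' ∈ S, cov q' b → q' = q

variable {cov} {S : Finset ι} {A : Finset κ}

theorem IsCover.exists_subset_hasPrivateDemands [DecidableEq ι] (h : IsCover cov S A) :
    ∃ T ⊆ S, IsCover cov T A ∧ HasPrivateDemands cov T A := by
  obtain ⟨T, hTS, hT⟩ := exists_minimal_le_of_wellFoundedLT (IsCover cov · A) S h
  refine ⟨T, hTS, hT.prop, fun q hq => ?_⟩
  have hnot : ¬ IsCover cov (T.erase q) A := fun h' =>
    (erase_ssubset hq).not_subset (hT.le_of_le h' (erase_subset q T))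
  simp only [IsCover, not_forall, not_exists, not_and] at hnot
  obtain ⟨b, hb, hbT⟩ := hnot
  have hunique : ∀ q' ∈ T, cov q' b → q' = q := fun q' hq' hq'b => by
    by_contra hne
    exact hbT q' (mem_erase.mpr ⟨hne, hq'⟩) hq'b
  obtain ⟨p, hp, hpb⟩ := hT.prop b hb
  exact ⟨b, hb, hunique p hp hpb ▸ hpb, hunique⟩

theorem IsCover.of_erase [DecidableEq κ] {a : κ} (h : IsCover cov S (A.erase a))
    (ha : ∃ p ∈ S, cov p a) : IsCover cov S A := fun b hb => by
  by_cases hba : b = a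
  · exact hba ▸ ha
  · exact h b (mem_erase.mpr ⟨hba, hb⟩)

theorem IsCover.insert_of_erase [DecidableEq ι] [DecidableEq κ] {a : κ} {q : ι}
    (h : IsCover cov S (A.erase a)) (hq : cov q a) : IsCover cov (insert q S) A := fun b hb => by
  by_cases hba : b = a
  · exact ⟨q, mem_insert_self q S, hba ▸ hq⟩
  · obtain ⟨p, hp, hpb⟩ := h b (mem_erase.mpr ⟨hba, hb⟩)
    exact ⟨p, mem_insert_of_mem hp, hpb⟩

theorem HasPrivateDemands.mono {B : Finset κ} (h : HasPrivateDemands cov S A) (hAB : A ⊆ B) :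
    HasPrivateDemands cov S B := fun q hq => by
  obtain ⟨b, hb, hqb⟩ := h q hq
  exact ⟨b, hAB hb, hqb⟩

end Cover

section PrimalDual

variable {ι κ O : Type*} [LinearOrder O] {cov : ι → κ → Prop} {k : κ → O}

/-- Why an irredundant cover covers the `k`-first demand at most twice: two extreme members take
over the private demands of all the others. -/
def HasTwoExtremeCovers (cov : ι → κ → Prop) (k : κ → O) : Prop :=
  ∀ a (T : Finset ι), (∀ q ∈ T, cov q a) → T.Nonempty →
    ∃ qL ∈ T, ∃ qR ∈ T, ∀ b, k a ≤ k b → ∀ q ∈ T, cov q b → cov qL b ∨ cov qR b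

theorem HasTwoExtremeCovers.card_filter_le_two [DecidableEq ι] [DecidableRel cov]
    (hk : HasTwoExtremeCovers cov k) {S : Finset ι} {A : Finset κ} {a : κ}
    (hS : HasPrivateDemands cov S A) (hA : ∀ b ∈ A, k a ≤ k b) : #{q ∈ S | cov q a} ≤ 2 := by
  rcases eq_empty_or_nonempty {q ∈ S | cov q a} with hT | hT
  · simp [hT]
  obtain ⟨qL, hqL, qR, hqR, hLR⟩ := hk a _ (fun q hq => (mem_filter.mp hq).2) hT
  have hsub : {q ∈ S | cov q a} ⊆ {qL, qR} := fun q hq => by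
    obtain ⟨b, hb, hqb, huniq⟩ := hS q (mem_filter.mp hq).1
    rcases hLR b (hA b hb) q hq hqb with hL | hR
    · simp [huniq qL (mem_filter.mp hqL).1 hL]
    · simp [huniq qR (mem_filter.mp hqR).1 hR]
  exact (card_le_card hsub).trans card_le_two

theorem HasTwoExtremeCovers.exists_cover [DecidableEq ι] [DecidableEq κ] [DecidableRel cov]
    (hk : HasTwoExtremeCovers cov k) {C : Finset ι} {z : ι → ℝ} (hz : ∀ p ∈ C, 0 ≤ z p)
    {c : ℝ} (hc : 0 < c) (A : Finset κ) (g : ι → ℝ) (hg : ∀ p ∈ C, 0 ≤ g p)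
    (hA : ∀ a ∈ A, c ≤ ∑ p ∈ C with cov p a, z p) :
    ∃ S ⊆ C, IsCover cov S A ∧ HasPrivateDemands cov S A ∧
      c * ∑ p ∈ S, g p ≤ 2 * ∑ p ∈ C, g p * z p := by
  induction A using Finset.strongInduction generalizing g with
  | H A ih =>
  rcases A.eq_empty_or_nonempty with rfl | hne
  · refine ⟨∅, empty_subset C, by simp [IsCover], by simp [HasPrivateDemands], ?_⟩
    simpa using sum_nonneg fun p hp => mul_nonneg (hg p hp) (hz p hp)
  obtain ⟨a, ha, hamin⟩ := A.exists_min_image k hne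
  have hCa : {p ∈ C | cov p a}.Nonempty := nonempty_of_sum_ne_zero (hc.trans_le (hA a ha)).ne'
  obtain ⟨q, hq, hqmin⟩ := {p ∈ C | cov p a}.exists_min_image g hCa
  rw [mem_filter] at hq
  set y := g q
  set g' : ι → ℝ := fun p => g p - if cov p a then y else 0 with hg'
  have hg'_nonneg : ∀ p ∈ C, 0 ≤ g' p := fun p hp => by
    by_cases hpa : cov p a
    · simpa [hg', hpa] using hqmin p (mem_filter.mpr ⟨hp, hpa⟩)
    · simpa [hg', hpa] using hg p hp
  obtain ⟨S', hS'C, hS'cov, hS'priv, hS'cost⟩ := ih (A.erase a) (erase_ssubset ha) g'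
    hg'_nonneg fun b hb => hA b (mem_of_mem_erase hb)
  have hy : 0 ≤ y := hg q hq.1
  have hpaid : 2 * ∑ p ∈ C, g' p * z p ≤ 2 * ∑ p ∈ C, g p * z p - 2 * c * y := by
    rw [sum_sub_ite_mul]
    nlinarith [hA a ha]
  have hS'g : ∑ p ∈ S', g p = ∑ p ∈ S', g' p + y * #{p ∈ S' | cov p a} :=
    sum_eq_sum_sub_ite_add S' (cov · a) g y
  by_cases hcov : ∃ p ∈ S', cov p a
  · refine ⟨S', hS'C, hS'cov.of_erase hcov, hS'priv.mono (erase_subset a A), ?_⟩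
    have htwo : (#{p ∈ S' | cov p a} : ℝ) ≤ 2 := by
      exact_mod_cast hk.card_filter_le_two hS'priv fun b hb => hamin b (mem_of_mem_erase hb)
    rw [hS'g]
    nlinarith [mul_le_mul_of_nonneg_left htwo (mul_nonneg hc.le hy)]
  · push Not at hcov
    obtain ⟨S, hSsub, hScov, hSpriv⟩ :=
      (hS'cov.insert_of_erase hq.2).exists_subset_hasPrivateDemands
    have hqS'C : insert q S' ⊆ C := insert_subset hq.1 hS'C
    refine ⟨S, hSsub.trans hqS'C, hScov, hSpriv, ?_⟩
    have hS'a : #{p ∈ S' | cov p a} = 0 := card_eq_zero.mpr (filter_eq_empty_iff.mpr hcov)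
    have hSg : ∑ p ∈ S, g p ≤ y + ∑ p ∈ S', g p := by
      rw [← sum_insert fun h => hcov q h hq.2]
      exact sum_le_sum_of_subset_of_nonneg hSsub fun p hp _ => hg p (hqS'C hp)
    rw [hS'g, hS'a] at hSg
    push_cast at hSg
    nlinarith [mul_le_mul_of_nonneg_left hSg hc.le]

end PrimalDual

def CrossesLeft (β α : ℕ × ℕ) : Prop := β.1 ≤ α.1 ∧ α.1 ≤ β.2 ∧ β.2 ≤ α.2

def CrossesRight (β α : ℕ × ℕ) : Prop := α.1 ≤ β.1 ∧ β.1 ≤ α.2 ∧ α.2 ≤ β.2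

instance : DecidableRel CrossesLeft := fun _ _ => inferInstanceAs (Decidable (_ ∧ _))

instance : DecidableRel CrossesRight := fun _ _ => inferInstanceAs (Decidable (_ ∧ _))

theorem hasTwoExtremeCovers_crossesLeft : HasTwoExtremeCovers CrossesLeft (fun α => α.2) := by
  intro α T hT hne
  obtain ⟨qL, hqL, hqLmin⟩ := T.exists_min_image (fun q => q.1) hne
  obtain ⟨qR, hqR, hqRmax⟩ := T.exists_max_image (fun q => q.2) hne
  refine ⟨qL, hqL, qR, hqR, fun β hαβ q hq ⟨h1, h2, _⟩ => ?_⟩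
  obtain ⟨-, l2, l3⟩ := hT qL hqL
  obtain ⟨r1, -, r3⟩ := hT qR hqR
  rcases le_total β.1 α.1 with hb | hb
  · exact Or.inl ⟨(hqLmin q hq).trans h1, hb.trans l2, l3.trans hαβ⟩
  · exact Or.inr ⟨r1.trans hb, h2.trans (hqRmax q hq), r3.trans hαβ⟩

theorem hasTwoExtremeCovers_crossesRight :
    HasTwoExtremeCovers CrossesRight (fun α => OrderDual.toDual α.1) := by
  intro α T hT hne
  obtain ⟨qL, hqL, hqLmin⟩ := T.exists_min_image (fun q => q.1) hne
  obtain ⟨qR, hqR, hqRmax⟩ := T.exists_max_image (fun q => q.2) hne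
  refine ⟨qL, hqL, qR, hqR, fun β hβα q hq ⟨_, h2, h3⟩ => ?_⟩
  rw [OrderDual.toDual_le_toDual] at hβα
  obtain ⟨l1, -, l3⟩ := hT qL hqL
  obtain ⟨r1, r2, -⟩ := hT qR hqR
  rcases le_total β.2 α.2 with hb | hb
  · exact Or.inl ⟨hβα.trans l1, (hqLmin q hq).trans h2, hb.trans l3⟩
  · exact Or.inr ⟨hβα.trans r1, r2.trans hb, h3.trans (hqRmax q hq)⟩

theorem sum_dominates_le_sum_crossesLeft_add_sum_crossesRight {C : Finset (ℕ × ℕ)}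
    {z : ℕ × ℕ → ℝ} (hz : ∀ β ∈ C, 0 ≤ z β) (α : ℕ × ℕ) :
    ∑ β ∈ C with Dominates β α, z β ≤
      ∑ β ∈ C with CrossesLeft β α, z β + ∑ β ∈ C with CrossesRight β α, z β := by
  have hsplit :
      {β ∈ C | Dominates β α} = {β ∈ C | CrossesLeft β α} ∪ {β ∈ C | CrossesRight β α} := by
    ext β
    simp only [mem_filter, mem_union]
    exact ⟨fun ⟨hβ, h⟩ => h.imp (⟨hβ, ·⟩) (⟨hβ, ·⟩),
      fun h => h.elim (fun h => ⟨h.1, .inl h.2⟩) (fun h => ⟨h.1, .inr h.2⟩)⟩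
  rw [hsplit]
  exact sum_union_le_add fun β hβ => hz β (mem_filter.mp (mem_of_mem_inter_left hβ)).1

theorem stmt_2_general (D C : Finset (ℕ × ℕ))
    (g z : ℕ × ℕ → ℝ) (hg : ∀ β ∈ C, 0 ≤ g β) (hz : ∀ β ∈ C, 0 ≤ z β)
    (hfeas : ∀ α ∈ D, 1 ≤ ∑ β ∈ C.filter (fun β => Dominates β α), z β) :
    ∃ S ⊆ C, (∀ α ∈ D, ∃ β ∈ S, Dominates β α) ∧
      ∑ β ∈ S, g β ≤ 8 * ∑ β ∈ C, g β * z β := by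
  classical
  set leftHeavy : ℕ × ℕ → Prop := fun α => 1 / 2 ≤ ∑ β ∈ C with CrossesLeft β α, z β
  obtain ⟨S₁, hS₁C, hS₁, -, hcost₁⟩ := hasTwoExtremeCovers_crossesLeft.exists_cover hz
    one_half_pos {α ∈ D | leftHeavy α} g hg fun α hα => (mem_filter.mp hα).2
  obtain ⟨S₂, hS₂C, hS₂, -, hcost₂⟩ := hasTwoExtremeCovers_crossesRight.exists_cover hz
    one_half_pos {α ∈ D | ¬ leftHeavy α} g hg fun α hα => by
      obtain ⟨hαD, hα⟩ := mem_filter.mp hα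
      linarith [hfeas α hαD, sum_dominates_le_sum_crossesLeft_add_sum_crossesRight hz α,
        not_le.mp hα]
  refine ⟨S₁ ∪ S₂, union_subset hS₁C hS₂C, fun α hα => ?_, ?_⟩
  · by_cases hαl : leftHeavy α
    · obtain ⟨β, hβ, hβα⟩ := hS₁ α (mem_filter.mpr ⟨hα, hαl⟩)
      exact ⟨β, mem_union_left S₂ hβ, .inl hβα⟩
    · obtain ⟨β, hβ, hβα⟩ := hS₂ α (mem_filter.mpr ⟨hα, hαl⟩)
      exact ⟨β, mem_union_right S₁ hβ, .inr hβα⟩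
  · have hunion := sum_union_le_add (t := S₂) (f := g) fun β hβ =>
      hg β (hS₁C (mem_of_mem_inter_left hβ))
    linarith

/-- Integrality gap at most 8 for the restricted dominating set
problem in circle graphs: any feasible fractional solution `z` of the standard
LP can be converted into an integral dominating set `S ⊆ C` of cost at most
`8` times the fractional cost. -/
theorem stmt_2 (m : ℕ) (hm : 0 < m) (D C : Finset (ℕ × ℕ))
    (hD : ∀ α ∈ D, α.1 < α.2 ∧ α.2 ≤ m - 1)
    (hC : ∀ β ∈ C, β.1 < β.2 ∧ β.2 ≤ m - 1)
    (g z : ℕ × ℕ → ℝ) (hg : ∀ β ∈ C, 0 ≤ g β) (hz : ∀ β ∈ C, 0 ≤ z β)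
    (hfeas : ∀ α ∈ D, 1 ≤ ∑ β ∈ C.filter (fun β => Dominates β α), z β) :
    ∃ S ⊆ C, (∀ α ∈ D, ∃ β ∈ S, Dominates β α) ∧
      ∑ β ∈ S, g β ≤ 8 * ∑ β ∈ C, g β * z β :=
  stmt_2_general D C g z hg hz hfeas
end

section
/- Let G = (V,E) be a finite simple graph, let s,t ∈ V, let X ⊆ E be such that (V,X) is connected, and let F ⊆ X be a nonempty set such that s and t are not connected in (V, X∖F) while s and t are connected in (V, X∖F') for every proper subset F' ⊊ F. Let Q be a path in G whose edge set is disjoint from F and whose two endpoints lie in different connected components of the graph (V, X∖F). Then s and t are connected in the graph (V, (X ∪ E(Q)) ∖ F), where E(Q) denotes the edge set of Q. -/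
open SimpleGraph

/-- If reachability holds after adding a single edge `s(u,v)`, then either it
held before, or it goes through the new edge. -/
lemma reach_insert_aux {V : Type*} (H : SimpleGraph V) (u v : V)
    {x y : V} (W : (H ⊔ SimpleGraph.fromEdgeSet {s(u, v)}).Walk x y) :
    H.Reachable x y ∨ (H.Reachable x u ∧ H.Reachable v y) ∨
      (H.Reachable x v ∧ H.Reachable u y) := by
  induction W with
  | nil => exact Or.inl (Reachable.refl _)
  | @cons x w y h W ih =>
    rcases h with h | h
    · rcases ih with h1 | ⟨h1, h2⟩ | ⟨h1, h2⟩
      · exact Or.inl ((Adj.reachable h).trans h1)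
      · exact Or.inr (Or.inl ⟨(Adj.reachable h).trans h1, h2⟩)
      · exact Or.inr (Or.inr ⟨(Adj.reachable h).trans h1, h2⟩)
    · rw [SimpleGraph.fromEdgeSet_adj, Set.mem_singleton_iff, Sym2.eq_iff] at h
      rcases h.1 with ⟨rfl, rfl⟩ | ⟨rfl, rfl⟩
      · rcases ih with h1 | ⟨h1, h2⟩ | ⟨h1, h2⟩
        · exact Or.inr (Or.inl ⟨Reachable.refl _, h1⟩)
        · exact Or.inr (Or.inl ⟨Reachable.refl _, h2⟩)
        · exact Or.inl h2
      · rcases ih with h1 | ⟨h1, h2⟩ | ⟨h1, h2⟩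
        · exact Or.inr (Or.inr ⟨Reachable.refl _, h1⟩)
        · exact Or.inl h2
        · exact Or.inr (Or.inr ⟨Reachable.refl _, h2⟩)

/-- If `F` is a minimal s-t disconnecting subset of a connected
spanning edge set `X`, and `Q` is a path avoiding `F` whose endpoints lie in
different components of `(V, X \ F)`, then adding the edges of `Q` to `X`
restores s-t connectivity after the failure of `F`. -/
theorem stmt_8 {V : Type*} [Fintype V] (G : SimpleGraph V) (s t : V)
    (X : Set (Sym2 V)) (hX : X ⊆ G.edgeSet)
    (hconn : (SimpleGraph.fromEdgeSet X).Connected)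
    (F : Set (Sym2 V)) (hFX : F ⊆ X) (hFne : F.Nonempty)
    (hdisc : ¬ (SimpleGraph.fromEdgeSet (X \ F)).Reachable s t)
    (hmin : ∀ F' ⊂ F, (SimpleGraph.fromEdgeSet (X \ F')).Reachable s t)
    {a b : V} (Q : G.Walk a b) (hQ : Q.IsPath)
    (hQF : ∀ f ∈ Q.edges, f ∉ F)
    (hcov : ¬ (SimpleGraph.fromEdgeSet (X \ F)).Reachable a b) :
    (SimpleGraph.fromEdgeSet ((X ∪ {f | f ∈ Q.edges}) \ F)).Reachable s t := by
  set H := SimpleGraph.fromEdgeSet (X \ F) with hH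
  -- endpoints of every F-edge lie on the s-side and t-side respectively
  have keyP : ∀ u v : V, s(u, v) ∈ F →
      (H.Reachable s u ∧ H.Reachable t v) ∨ (H.Reachable s v ∧ H.Reachable t u) := by
    intro u v he
    have hsub : F \ {s(u, v)} ⊂ F := by
      constructor
      · exact Set.diff_subset
      · intro hsup
        have := hsup he
        simp at this
    have hr := hmin _ hsub
    have hset : X \ (F \ {s(u, v)}) = (X \ F) ∪ {s(u, v)} := by
      ext e
      simp only [Set.mem_diff, Set.mem_union, Set.mem_singleton_iff]
      constructor
      · rintro ⟨heX, hne⟩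
        by_cases hF : e ∈ F
        · right; by_contra hne'; exact hne ⟨hF, hne'⟩
        · left; exact ⟨heX, hF⟩
      · rintro (⟨heX, hF⟩ | rfl)
        · exact ⟨heX, fun h => hF h.1⟩
        · exact ⟨hFX he, fun h => h.2 rfl⟩
    rw [hset, SimpleGraph.fromEdgeSet_union] at hr
    obtain ⟨W⟩ := hr
    rcases reach_insert_aux H u v W with h | ⟨h1, h2⟩ | ⟨h1, h2⟩
    · exact absurd h hdisc
    · exact Or.inl ⟨h1, h2.symm⟩
    · exact Or.inr ⟨h1, h2.symm⟩
  -- every vertex is reachable from s or from t in H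
  have keyA : ∀ v : V, H.Reachable s v ∨ H.Reachable t v := by
    have main : ∀ {x v : V}, (SimpleGraph.fromEdgeSet X).Walk x v →
        (H.Reachable s x ∨ H.Reachable t x) → (H.Reachable s v ∨ H.Reachable t v) := by
      intro x v W
      induction W with
      | nil => exact id
      | @cons x w v h W ih =>
        intro hx
        by_cases hF : s(x, w) ∈ F
        · rcases keyP x w hF with ⟨_, h2⟩ | ⟨h1, _⟩
          · exact ih (Or.inr h2)
          · exact ih (Or.inl h1)
        · have hadj : H.Adj x w := by
            rw [hH, SimpleGraph.fromEdgeSet_adj]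
            rw [SimpleGraph.fromEdgeSet_adj] at h
            exact ⟨⟨h.1, hF⟩, h.2⟩
          rcases hx with h1 | h1
          · exact ih (Or.inl (h1.trans hadj.reachable))
          · exact ih (Or.inr (h1.trans hadj.reachable))
    intro v
    obtain ⟨W⟩ := hconn.preconnected s v
    exact main W (Or.inl (Reachable.refl _))
  -- a and b on different sides
  have hab : (H.Reachable s a ∧ H.Reachable t b) ∨
      (H.Reachable s b ∧ H.Reachable t a) := by
    rcases keyA a with ha | ha <;> rcases keyA b with hb | hb
    · exact absurd (ha.symm.trans hb) hcov
    · exact Or.inl ⟨ha, hb⟩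
    · exact Or.inr ⟨hb, ha⟩
    · exact absurd (ha.symm.trans hb) hcov
  set K := SimpleGraph.fromEdgeSet ((X ∪ {f | f ∈ Q.edges}) \ F) with hK
  have hHK : H ≤ K :=
    SimpleGraph.fromEdgeSet_mono (Set.diff_subset_diff_left Set.subset_union_left)
  have hQK : ∀ e ∈ Q.edges, e ∈ K.edgeSet := by
    intro e he
    rw [hK, SimpleGraph.edgeSet_fromEdgeSet]
    refine ⟨⟨Or.inr he, hQF e he⟩, ?_⟩
    exact SimpleGraph.not_isDiag_of_mem_edgeSet G (Q.edges_subset_edgeSet he)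
  have hQab : K.Reachable a b := ⟨Q.transfer K hQK⟩
  rcases hab with ⟨h1, h2⟩ | ⟨h1, h2⟩
  · exact ((h1.mono hHK).trans hQab).trans (h2.mono hHK).symm
  · exact ((h1.mono hHK).trans hQab.symm).trans (h2.mono hHK).symm
end
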